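/- arXiv:1505.04243 — 4 statements merged into one kernel-verified Lean document; each statement's English description precedes it below -/
import Mathlib

section
/- For the FS_ε iterates with learning rate ε > 0 and every k ≥ 0, there exists an index i ∈ {0, …, k} and a least squares solution β^i_LS (i.e., XᵀXβ^i_LS = Xᵀy) such that ‖β^i − β^i_LS‖₂ ≤ (√p / λ_pmin(XᵀX))·[ ‖Xβ_LS‖₂²/(ε(k+1)) + ε ], where β_LS is any least squares solution; moreover the same index i satisfies, for every least squares solution β_LS, ‖Xβ^i − Xβ_LS‖₂ ≤ (√p / √(λ_pmin(XᵀX)))·[ ‖Xβ_LS‖₂²/(ε(k+1)) + ε ]. -/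
open Matrix Finset

noncomputable section

open RealInnerProductSpace in
lemma spec_key (p : ℕ) (A : Matrix (Fin p) (Fin p) ℝ) (hA : A.IsHermitian)
    (hpsd : ∀ w : Fin p → ℝ, 0 ≤ w ⬝ᵥ (A *ᵥ w))
    (lam : ℝ) (hlam_pos : 0 < lam)
    (hlam_min : ∀ μ : ℝ, (∃ v : Fin p → ℝ, v ≠ 0 ∧ A *ᵥ v = μ • v) → μ ≠ 0 → lam ≤ μ)
    (w : Fin p → ℝ) :
    lam * (w ⬝ᵥ (A *ᵥ w)) ≤ (A *ᵥ w) ⬝ᵥ (A *ᵥ w) ∧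
    ∃ u : Fin p → ℝ, A *ᵥ u = A *ᵥ w ∧ lam ^ 2 * (u ⬝ᵥ u) ≤ (A *ᵥ w) ⬝ᵥ (A *ᵥ w) := by
  set b := hA.eigenvectorBasis with hb
  set μ := hA.eigenvalues with hμ
  have hinner : ∀ x y : EuclideanSpace ℝ (Fin p), ⟪x, y⟫ = (x : Fin p → ℝ) ⬝ᵥ (y : Fin p → ℝ) := by
    intro x y; rw [PiLp.inner_apply]; simp [RCLike.inner_apply, dotProduct]
    exact Finset.sum_congr rfl fun _ _ => mul_comm _ _
  -- eigenvalues are nonneg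
  have hμ0 : ∀ i, 0 ≤ μ i := by
    intro i
    have h1 : A *ᵥ ⇑(b i) = μ i • ⇑(b i) := hA.mulVec_eigenvectorBasis i
    have h2 : 0 ≤ (⇑(b i) : Fin p → ℝ) ⬝ᵥ (A *ᵥ ⇑(b i)) := hpsd _
    rw [h1] at h2
    have h3 : (⇑(b i) : Fin p → ℝ) ⬝ᵥ (μ i • ⇑(b i)) = μ i * ⟪b i, b i⟫ := by
      rw [hinner]; simp only [dotProduct, Pi.smul_apply, smul_eq_mul, PiLp.inner_apply,
        RCLike.inner_apply, starRingEnd_apply, star_trivial, Finset.mul_sum]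
      exact Finset.sum_congr rfl fun t _ => by
        show b i t * (μ i * b i t) = μ i * (b i t * b i t); ring
    rw [h3, orthonormal_iff_ite.1 b.orthonormal i i, if_pos rfl, mul_one] at h2
    exact h2
  have hμlam : ∀ i, μ i ≠ 0 → lam ≤ μ i := by
    intro i hi
    refine hlam_min _ ⟨⇑(b i), ?_, hA.mulVec_eigenvectorBasis i⟩ hi
    have := b.orthonormal.ne_zero i
    intro h; apply this; ext t; exact congrFun h t
  -- expansion machinery
  set T : (Fin p → ℝ) → (Fin p → ℝ) := fun d => ∑ i, d i • (⇑(b i) : Fin p → ℝ) with hT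
  set c : Fin p → ℝ := fun i => ⟪b i, WithLp.toLp 2 w⟫ with hc
  have hTw : T c = w := by
    have h := b.sum_repr (WithLp.toLp 2 w)
    simp only [b.repr_apply_apply] at h
    have h' := congrArg WithLp.ofLp h
    simpa [hT, hc] using h'
  have hdot : ∀ d e : Fin p → ℝ, T d ⬝ᵥ T e = ∑ i, d i * e i := by
    intro d e
    have : ⟪(∑ i, d i • b i : EuclideanSpace ℝ (Fin p)), ∑ i, e i • b i⟫ = ∑ i, d i * e i := by
      rw [inner_sum]
      refine Finset.sum_congr rfl fun i _ => ?_
      rw [sum_inner, Finset.sum_eq_single i]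
      · rw [real_inner_smul_left, real_inner_smul_right, orthonormal_iff_ite.1 b.orthonormal i i]
        simp [mul_comm]
      · intro j _ hj
        rw [real_inner_smul_left, real_inner_smul_right, orthonormal_iff_ite.1 b.orthonormal j i,
          if_neg hj]; ring
      · simp
    rw [← this, hinner]
    congr 1
    all_goals simp [hT]
  have hAT : ∀ d : Fin p → ℝ, A *ᵥ T d = T (fun i => μ i * d i) := by
    intro d
    have hlin : ∀ v, A *ᵥ v = A.mulVecLin v := fun v => rfl
    rw [hT]
    simp only [hlin, map_sum, _root_.map_smul]
    refine Finset.sum_congr rfl fun i _ => ?_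
    rw [← hlin, hA.mulVec_eigenvectorBasis, smul_smul, mul_comm]
  have hAw : A *ᵥ w = T (fun i => μ i * c i) := by rw [← hTw, hAT]
  have hq1 : w ⬝ᵥ (A *ᵥ w) = ∑ i, μ i * c i ^ 2 := by
    rw [hAw, ← hTw, hdot]; refine Finset.sum_congr rfl fun i _ => by ring
  have hq2 : (A *ᵥ w) ⬝ᵥ (A *ᵥ w) = ∑ i, μ i ^ 2 * c i ^ 2 := by
    rw [hAw, hdot]; refine Finset.sum_congr rfl fun i _ => by ring
  constructor
  · rw [hq1, hq2, Finset.mul_sum]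
    refine Finset.sum_le_sum fun i _ => ?_
    rcases eq_or_ne (μ i) 0 with h | h
    · simp [h]
    · have h1 : lam ≤ μ i := hμlam i h
      have : lam * (c i ^ 2) ≤ μ i * c i ^ 2 :=
        mul_le_mul_of_nonneg_right h1 (sq_nonneg _)
      calc lam * (μ i * c i ^ 2) = μ i * (lam * c i ^ 2) := by ring
        _ ≤ μ i * (μ i * c i ^ 2) := mul_le_mul_of_nonneg_left this (hμ0 i)
        _ = μ i ^ 2 * c i ^ 2 := by ring
  · refine ⟨T (fun i => if μ i = 0 then 0 else c i), ?_, ?_⟩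
    · rw [hAT, hAw]
      have he : (fun i => μ i * (if μ i = 0 then 0 else c i)) = fun i => μ i * c i := by
        ext i; rcases eq_or_ne (μ i) 0 with h | h <;> simp [h]
      rw [he]
    · rw [hdot, hq2, Finset.mul_sum]
      refine Finset.sum_le_sum fun i _ => ?_
      rcases eq_or_ne (μ i) 0 with h | h
      · simp [h, sq_nonneg, mul_nonneg (sq_nonneg (μ i)) (sq_nonneg (c i))]
      · have h1 : lam ≤ μ i := hμlam i h
        rw [if_neg h]
        calc lam ^ 2 * (c i * c i) = lam ^ 2 * c i ^ 2 := by ring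
          _ ≤ μ i ^ 2 * c i ^ 2 := by
              apply mul_le_mul_of_nonneg_right _ (sq_nonneg _)
              exact pow_le_pow_left₀ hlam_pos.le h1 2

set_option maxHeartbeats 1000000 in
/-- **Theorem 3.1(ii)-(iii) (regression coefficients and predictions for FS_ε).** For the
FS_ε iterates with learning rate ε > 0 and every k ≥ 0, there exists an index i ∈ {0,…,k}
and a least squares solution β^i_LS with
`‖β^i − β^i_LS‖₂ ≤ (√p/λ_pmin(XᵀX))·[‖Xβ_LS‖₂²/(ε(k+1)) + ε]`; moreover the same index i
satisfies, for every least squares solution β_LS: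
`‖Xβ^i − Xβ_LS‖₂ ≤ (√p/√λ_pmin(XᵀX))·[‖Xβ_LS‖₂²/(ε(k+1)) + ε]`. -/
theorem fs_coefficients_and_predictions_bound
    (n p : ℕ) (hn : 0 < n) (hp : 0 < p)
    (X : Matrix (Fin n) (Fin p) ℝ) (hX : X ≠ 0)
    (hcols : ∀ j : Fin p, ∑ i, (X i j) ^ 2 = 1)
    (y : Fin n → ℝ)
    -- `lam` is the smallest nonzero eigenvalue of XᵀX
    (lam : ℝ)
    (hlam_eig : ∃ v : Fin p → ℝ, v ≠ 0 ∧ (Xᵀ * X).mulVec v = lam • v)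
    (hlam_ne : lam ≠ 0)
    (hlam_min : ∀ μ : ℝ, (∃ v : Fin p → ℝ, v ≠ 0 ∧ (Xᵀ * X).mulVec v = μ • v) → μ ≠ 0 → lam ≤ μ)
    -- FS_ε iterates
    (ε : ℝ) (hε0 : 0 < ε)
    (β : ℕ → Fin p → ℝ) (hβ0 : β 0 = 0)
    (r : ℕ → Fin n → ℝ) (hr : ∀ k, r k = y - X.mulVec (β k))
    (jj : ℕ → Fin p)
    (hjmax : ∀ k, ∀ j' : Fin p, |∑ i, r k i * X i j'| ≤ |∑ i, r k i * X i (jj k)|)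
    (hupd : ∀ k, β (k + 1) = β k +
      (ε * Real.sign (∑ i, r k i * X i (jj k))) • (Pi.single (jj k) (1 : ℝ) : Fin p → ℝ))
    -- βLS is any least squares solution
    (βLS : Fin p → ℝ) (hβLS : (Xᵀ * X).mulVec βLS = Xᵀ.mulVec y) :
    ∀ k : ℕ, ∃ i ≤ k,
      (∃ βiLS : Fin p → ℝ, (Xᵀ * X).mulVec βiLS = Xᵀ.mulVec y ∧
        Real.sqrt (∑ j, (β i j - βiLS j) ^ 2) ≤
          (Real.sqrt (p : ℝ) / lam) *
            ((∑ t, (X.mulVec βLS t) ^ 2) / (ε * ((k : ℝ) + 1)) + ε)) ∧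
      (∀ βLS' : Fin p → ℝ, (Xᵀ * X).mulVec βLS' = Xᵀ.mulVec y →
        Real.sqrt (∑ t, (X.mulVec (β i) t - X.mulVec βLS' t) ^ 2) ≤
          (Real.sqrt (p : ℝ) / Real.sqrt lam) *
            ((∑ t, (X.mulVec βLS' t) ^ 2) / (ε * ((k : ℝ) + 1)) + ε)) := by
  intro k
  have hA_herm : (Xᵀ * X).IsHermitian := by simpa using isHermitian_conjTranspose_mul_self X
  have hdotA : ∀ u v : Fin p → ℝ, u ⬝ᵥ ((Xᵀ * X) *ᵥ v) = (X *ᵥ u) ⬝ᵥ (X *ᵥ v) := by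
    intro u v; rw [← mulVec_mulVec, dotProduct_mulVec, vecMul_transpose]
  have hpsd : ∀ w : Fin p → ℝ, 0 ≤ w ⬝ᵥ ((Xᵀ * X) *ᵥ w) := by
    intro w; rw [hdotA]; exact Finset.sum_nonneg fun i _ => mul_self_nonneg _
  have hlam_pos : 0 < lam := by
    obtain ⟨v, hv0, hv⟩ := hlam_eig
    have h1 : 0 ≤ v ⬝ᵥ ((Xᵀ * X) *ᵥ v) := hpsd v
    rw [hv] at h1
    have h2 : v ⬝ᵥ (lam • v) = lam * (v ⬝ᵥ v) := by
      simp only [dotProduct, Pi.smul_apply, smul_eq_mul, Finset.mul_sum]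
      exact Finset.sum_congr rfl fun t _ => by ring
    rw [h2] at h1
    obtain ⟨t0, ht0⟩ := Function.ne_iff.1 hv0
    have h3 : 0 < v ⬝ᵥ v :=
      Finset.sum_pos' (fun t _ => mul_self_nonneg _)
        ⟨t0, Finset.mem_univ t0, mul_self_pos.2 ht0⟩
    rcases hlam_ne.lt_or_gt with h | h
    · nlinarith
    · exact h
  have hpred_eq : ∀ u v : Fin p → ℝ, (Xᵀ * X) *ᵥ u = (Xᵀ * X) *ᵥ v → X *ᵥ u = X *ᵥ v := by
    intro u v h
    have h0 : (Xᵀ * X) *ᵥ (u - v) = 0 := by rw [mulVec_sub, h, sub_self]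
    have h1 : (X *ᵥ (u - v)) ⬝ᵥ (X *ᵥ (u - v)) = 0 := by
      rw [← hdotA, h0, dotProduct_zero]
    have h2 : X *ᵥ (u - v) = 0 := by
      funext m
      have := (Finset.sum_eq_zero_iff_of_nonneg
        (fun t _ => mul_self_nonneg ((X *ᵥ (u - v)) t))).1 h1 m (Finset.mem_univ m)
      exact mul_self_eq_zero.1 this
    have h3 : X *ᵥ u - X *ᵥ v = 0 := by rw [← mulVec_sub]; exact h2
    exact sub_eq_zero.1 h3
  have hcomp : ∀ (w : Fin p → ℝ) (j' : Fin p),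
      ((Xᵀ * X) *ᵥ w) j' = ∑ m, X m j' * (X *ᵥ w) m := by
    intro w j'
    rw [← mulVec_mulVec]
    simp [mulVec, dotProduct, transpose_apply]
  have hXty : ∀ j' : Fin p, (Xᵀ *ᵥ y) j' = ∑ m, X m j' * y m := by
    intro j'; simp [mulVec, dotProduct, transpose_apply]
  have hgrad : ∀ t (j' : Fin p),
      ∑ m, r t m * X m j' = (Xᵀ *ᵥ y) j' - ((Xᵀ * X) *ᵥ (β t)) j' := by
    intro t j'
    rw [hcomp, hXty, ← Finset.sum_sub_distrib, hr t]
    exact Finset.sum_congr rfl fun m _ => by simp only [Pi.sub_apply]; ring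
  set g : ℕ → ℝ := fun t => ∑ i, r t i * X i (jj t) with hg
  set G : ℕ → ℝ := fun t => |g t| with hGdef
  have hGnn : ∀ t, 0 ≤ G t := fun t => abs_nonneg _
  have hjmax' : ∀ t (j' : Fin p), |∑ m, r t m * X m j'| ≤ G t := fun t j' => hjmax t j'
  set K : ℝ := (k : ℝ) + 1 with hK
  have hKpos : 0 < K := by positivity
  set a0 : ℝ := ∑ t, (X.mulVec βLS t) ^ 2 with ha0
  have ha0nn : 0 ≤ a0 := Finset.sum_nonneg fun t _ => sq_nonneg _
  set B : ℝ := a0 / (ε * K) + ε with hB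
  have hεK : 0 < ε * K := mul_pos hε0 hKpos
  have hBnn : 0 ≤ B := add_nonneg (div_nonneg ha0nn hεK.le) hε0.le
  by_cases hzero : ∃ t ≤ k, g t = 0
  · obtain ⟨t, htk, hgt⟩ := hzero
    have hLS : (Xᵀ * X) *ᵥ (β t) = Xᵀ *ᵥ y := by
      funext j'
      have h1 : |∑ m, r t m * X m j'| ≤ G t := hjmax' t j'
      rw [hGdef] at h1
      simp only [hgt, abs_zero] at h1
      have h2 : ∑ m, r t m * X m j' = 0 := abs_eq_zero.1 (le_antisymm h1 (abs_nonneg _))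
      have h3 := hgrad t j'
      rw [h2] at h3
      linarith [h3]
    refine ⟨t, htk, ⟨β t, hLS, ?_⟩, ?_⟩
    · have : Real.sqrt (∑ j, (β t j - β t j) ^ 2) = 0 := by
        simp
      rw [this]
      exact mul_nonneg (div_nonneg (Real.sqrt_nonneg _) hlam_pos.le) hBnn
    · intro βLS' hβLS'
      have hXeq : X *ᵥ (β t) = X *ᵥ βLS' := hpred_eq _ _ (by rw [hLS, hβLS'])
      have hz : Real.sqrt (∑ m, (X.mulVec (β t) m - X.mulVec βLS' m) ^ 2) = 0 := by
        have : ∀ m, X.mulVec (β t) m - X.mulVec βLS' m = 0 := fun m => by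
          rw [congrFun hXeq m, sub_self]
        simp [this]
      rw [hz]
      have hnn' : 0 ≤ (∑ m, (X.mulVec βLS' m) ^ 2) / (ε * K) + ε :=
        add_nonneg (div_nonneg (Finset.sum_nonneg fun m _ => sq_nonneg _) hεK.le) hε0.le
      exact mul_nonneg (div_nonneg (Real.sqrt_nonneg _) (Real.sqrt_nonneg _)) hnn'
  · push_neg at hzero
    have hnz : ∀ t, t ≤ k → g t ≠ 0 := hzero
    set a : ℕ → ℝ := fun t => ∑ m, (X.mulVec (β t) m - X.mulVec βLS m) ^ 2 with haeq
    have hann : ∀ t, 0 ≤ a t := fun t => Finset.sum_nonneg fun m _ => sq_nonneg _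
    have ha00 : a 0 = a0 := by
      simp only [haeq, ha0, hβ0, mulVec_zero, Pi.zero_apply, zero_sub, neg_sq]
    have hstep : ∀ t, t ≤ k → a (t + 1) = a t - 2 * ε * G t + ε ^ 2 := by
      intro t htk
      have hgt := hnz t htk
      have hXnext : X *ᵥ β (t + 1) =
          fun m => (X *ᵥ β t) m + (ε * Real.sign (g t)) * X m (jj t) := by
        rw [hupd t, mulVec_add, mulVec_smul]
        funext m
        simp [mulVec_single]
        exact Or.inl (Or.inl rfl)
      have expand : a (t + 1) = a t +
          2 * (ε * Real.sign (g t)) *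
            (∑ m, ((X *ᵥ β t) m - (X *ᵥ βLS) m) * X m (jj t)) +
          (ε * Real.sign (g t)) ^ 2 * (∑ m, X m (jj t) ^ 2) := by
        simp only [haeq]
        rw [Finset.mul_sum, Finset.mul_sum, ← Finset.sum_add_distrib, ← Finset.sum_add_distrib]
        refine Finset.sum_congr rfl fun m _ => ?_
        rw [congrFun hXnext m]
        ring
      have hS1 : ∑ m, ((X *ᵥ β t) m - (X *ᵥ βLS) m) * X m (jj t) = -(g t) := by
        have h1 : ∑ m, ((X *ᵥ β t) m - (X *ᵥ βLS) m) * X m (jj t)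
            = ((Xᵀ * X) *ᵥ β t) (jj t) - ((Xᵀ * X) *ᵥ βLS) (jj t) := by
          rw [hcomp, hcomp, ← Finset.sum_sub_distrib]
          exact Finset.sum_congr rfl fun m _ => by ring
        have h3 : g t = (Xᵀ *ᵥ y) (jj t) - ((Xᵀ * X) *ᵥ β t) (jj t) := hgrad t (jj t)
        rw [h1, congrFun hβLS (jj t)]
        rw [h3]; ring
      have hsign : (ε * Real.sign (g t)) * (-(g t)) = -(ε * G t) := by
        rcases hgt.lt_or_gt with h | h
        · rw [Real.sign_of_neg h, hGdef]
          simp only []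
          rw [abs_of_neg h]; ring
        · rw [Real.sign_of_pos h, hGdef]
          simp only []
          rw [abs_of_pos h]; ring
      have hsq : (ε * Real.sign (g t)) ^ 2 = ε ^ 2 := by
        rcases hgt.lt_or_gt with h | h
        · rw [Real.sign_of_neg h]; ring
        · rw [Real.sign_of_pos h]; ring
      rw [expand, hS1, hsq, hcols (jj t)]
      have h4 : 2 * (ε * Real.sign (g t)) * (-(g t)) =
          2 * ((ε * Real.sign (g t)) * (-(g t))) := by ring
      rw [h4, hsign]; ring
    have htel : ∀ m, m ≤ k + 1 →
        a m = a0 - 2 * ε * (∑ t ∈ Finset.range m, G t) + m * ε ^ 2 := by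
      intro m
      induction m with
      | zero => intro _; simp [ha00]
      | succ t ih =>
        intro h
        have h1 : t ≤ k := Nat.lt_succ_iff.mp h
        rw [hstep t h1, ih (by omega)]
        rw [Finset.sum_range_succ]
        push_cast; ring
    have hsum_bound : 2 * ε * (∑ t ∈ Finset.range (k + 1), G t) ≤ a0 + K * ε ^ 2 := by
      have h1 : 0 ≤ a (k + 1) := hann _
      have h2 := htel (k + 1) le_rfl
      rw [h2] at h1
      push_cast at h1
      rw [hK]
      linarith
    obtain ⟨i, hi_mem, hi_min⟩ :=
      Finset.exists_min_image (Finset.range (k + 1)) G ⟨0, Finset.mem_range.2 (Nat.succ_pos k)⟩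
    have hik : i ≤ k := Nat.lt_succ_iff.mp (Finset.mem_range.1 hi_mem)
    have hcard : K * G i ≤ ∑ t ∈ Finset.range (k + 1), G t := by
      have h := Finset.card_nsmul_le_sum (Finset.range (k + 1)) G (G i)
        (fun t ht => hi_min t ht)
      rw [Finset.card_range, nsmul_eq_mul] at h
      rw [hK]; push_cast at h ⊢; linarith
    have h3 : 2 * ε * (K * G i) ≤ a0 + K * ε ^ 2 := by
      have h2ε : (0:ℝ) ≤ 2 * ε := by linarith
      calc 2 * ε * (K * G i) ≤ 2 * ε * (∑ t ∈ Finset.range (k + 1), G t) :=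
            mul_le_mul_of_nonneg_left hcard h2ε
        _ ≤ a0 + K * ε ^ 2 := hsum_bound
    have hεKB : ε * K * B = a0 + ε ^ 2 * K := by
      rw [hB]; field_simp
    have hGiB : G i ≤ B := by
      have h4 : ε * K * G i ≤ ε * K * B := by
        nlinarith [hGnn i, mul_nonneg (mul_nonneg hε0.le hKpos.le) (hGnn i)]
      exact le_of_mul_le_mul_left h4 hεK
    -- gradient vector bound at step i
    have hAwj : ∀ j' : Fin p, ((Xᵀ * X) *ᵥ (β i - βLS)) j' = -(∑ m, r i m * X m j') := by
      intro j'
      have h1 : ((Xᵀ * X) *ᵥ (β i - βLS)) j'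
          = ((Xᵀ * X) *ᵥ β i) j' - ((Xᵀ * X) *ᵥ βLS) j' := by
        rw [mulVec_sub]; rfl
      rw [h1, congrFun hβLS j', hgrad i j']; ring
    have hAbound : ((Xᵀ * X) *ᵥ (β i - βLS)) ⬝ᵥ ((Xᵀ * X) *ᵥ (β i - βLS)) ≤ p * G i ^ 2 := by
      have h1 : ∀ j' : Fin p, ((Xᵀ * X) *ᵥ (β i - βLS)) j' * ((Xᵀ * X) *ᵥ (β i - βLS)) j'
          ≤ G i ^ 2 := by
        intro j'
        have h2 : |((Xᵀ * X) *ᵥ (β i - βLS)) j'| ≤ G i := by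
          rw [hAwj j', abs_neg]; exact hjmax' i j'
        calc ((Xᵀ * X) *ᵥ (β i - βLS)) j' * ((Xᵀ * X) *ᵥ (β i - βLS)) j'
            = |((Xᵀ * X) *ᵥ (β i - βLS)) j'| ^ 2 := by rw [sq_abs]; ring
          _ ≤ G i ^ 2 := pow_le_pow_left₀ (abs_nonneg _) h2 2
      calc ((Xᵀ * X) *ᵥ (β i - βLS)) ⬝ᵥ ((Xᵀ * X) *ᵥ (β i - βLS))
          = ∑ j', ((Xᵀ * X) *ᵥ (β i - βLS)) j' * ((Xᵀ * X) *ᵥ (β i - βLS)) j' := rfl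
        _ ≤ ∑ _j' : Fin p, G i ^ 2 := Finset.sum_le_sum fun j' _ => h1 j'
        _ = p * G i ^ 2 := by
            rw [Finset.sum_const, Finset.card_univ, Fintype.card_fin, nsmul_eq_mul]
    obtain ⟨hq1, u, hu1, hu2⟩ :=
      spec_key p (Xᵀ * X) hA_herm hpsd lam hlam_pos hlam_min (β i - βLS)
    have hwAw : (β i - βLS) ⬝ᵥ ((Xᵀ * X) *ᵥ (β i - βLS)) = a i := by
      rw [hdotA, mulVec_sub]
      simp only [haeq]
      exact Finset.sum_congr rfl fun m _ => by simp only [Pi.sub_apply]; ring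
    have lam_ai : lam * a i ≤ p * G i ^ 2 := by
      rw [← hwAw]; exact le_trans hq1 hAbound
    have hGfrac_nn : 0 ≤ Real.sqrt p * G i / lam :=
      div_nonneg (mul_nonneg (Real.sqrt_nonneg _) (hGnn i)) hlam_pos.le
    refine ⟨i, hik, ⟨β i - u, ?_, ?_⟩, ?_⟩
    · rw [mulVec_sub, hu1, mulVec_sub, hβLS]
      exact sub_sub_cancel _ _
    · have hrw : (∑ j, (β i j - (β i - u) j) ^ 2) = ∑ j, u j ^ 2 := by
        refine Finset.sum_congr rfl fun j _ => ?_
        simp only [Pi.sub_apply]; ring_nf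
      rw [hrw]
      have huu : (∑ j, u j ^ 2) = u ⬝ᵥ u :=
        Finset.sum_congr rfl fun j _ => by rw [sq]
      have h5 : lam ^ 2 * (∑ j, u j ^ 2) ≤ p * G i ^ 2 := by
        rw [huu]; exact le_trans hu2 hAbound
      have hsq2 : (∑ j, u j ^ 2) ≤ (Real.sqrt p * G i / lam) ^ 2 := by
        rw [div_pow, mul_pow, Real.sq_sqrt (Nat.cast_nonneg p)]
        rw [le_div_iff₀ (by positivity : (0:ℝ) < lam ^ 2)]
        nlinarith [h5]
      calc Real.sqrt (∑ j, u j ^ 2)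
          ≤ Real.sqrt ((Real.sqrt p * G i / lam) ^ 2) := Real.sqrt_le_sqrt hsq2
        _ = Real.sqrt p * G i / lam := Real.sqrt_sq hGfrac_nn
        _ = (Real.sqrt p / lam) * G i := by ring
        _ ≤ (Real.sqrt p / lam) * B :=
            mul_le_mul_of_nonneg_left hGiB (div_nonneg (Real.sqrt_nonneg _) hlam_pos.le)
    · intro βLS' hβLS'
      have hXeq : X *ᵥ βLS' = X *ᵥ βLS := hpred_eq _ _ (by rw [hβLS', hβLS])
      have hsums : (∑ t, (X.mulVec βLS' t) ^ 2) = a0 := by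
        rw [ha0]
        exact Finset.sum_congr rfl fun t _ => by rw [congrFun hXeq t]
      have hai : (∑ t, (X.mulVec (β i) t - X.mulVec βLS' t) ^ 2) = a i := by
        simp only [haeq]
        exact Finset.sum_congr rfl fun t _ => by rw [congrFun hXeq t]
      rw [hsums, hai]
      have h6 : a i ≤ (Real.sqrt p * G i / Real.sqrt lam) ^ 2 := by
        rw [div_pow, mul_pow, Real.sq_sqrt (Nat.cast_nonneg p), Real.sq_sqrt hlam_pos.le]
        rw [le_div_iff₀ hlam_pos]
        nlinarith [lam_ai]
      have hfrac_nn : 0 ≤ Real.sqrt p * G i / Real.sqrt lam :=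
        div_nonneg (mul_nonneg (Real.sqrt_nonneg _) (hGnn i)) (Real.sqrt_nonneg _)
      calc Real.sqrt (a i)
          ≤ Real.sqrt ((Real.sqrt p * G i / Real.sqrt lam) ^ 2) := Real.sqrt_le_sqrt h6
        _ = Real.sqrt p * G i / Real.sqrt lam := Real.sqrt_sq hfrac_nn
        _ = (Real.sqrt p / Real.sqrt lam) * G i := by ring
        _ ≤ (Real.sqrt p / Real.sqrt lam) * B :=
            mul_le_mul_of_nonneg_left hGiB
              (div_nonneg (Real.sqrt_nonneg _) (Real.sqrt_nonneg _))

end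
end

section
/- For the FS_ε iterates with learning rate ε > 0 and every k ≥ 0, there exists an index i ∈ {0, …, k} such that the maximum absolute correlation between residuals and predictors satisfies ‖Xᵀr^i‖_∞ ≤ ‖Xβ_LS‖₂²/(2ε(k+1)) + ε/2, where β_LS is any least squares solution. -/
open Matrix Finset

noncomputable section

lemma sign_mul_self_eq_abs (x : ℝ) : Real.sign x * x = |x| := by
  rcases lt_trichotomy x 0 with h | h | h
  · rw [Real.sign_of_neg h, abs_of_neg h]; ring
  · simp [h]
  · rw [Real.sign_of_pos h, abs_of_pos h]; ring

lemma sign_sq_le_one (x : ℝ) : (Real.sign x) ^ 2 ≤ 1 := by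
  rcases lt_trichotomy x 0 with h | h | h
  · rw [Real.sign_of_neg h]; norm_num
  · simp [h]
  · rw [Real.sign_of_pos h]; norm_num

/-- **Theorem 3.1(iv) (correlation values for FS_ε).** For the FS_ε iterates with learning
rate ε > 0 and every k ≥ 0, there exists an index i ∈ {0,…,k} with
`‖Xᵀr^i‖_∞ ≤ ‖Xβ_LS‖₂²/(2ε(k+1)) + ε/2`
(formalized as: every coordinate of `Xᵀr^i` is bounded in absolute value by the bound). -/
theorem fs_correlation_bound
    (n p : ℕ) (hn : 0 < n) (hp : 0 < p)
    (X : Matrix (Fin n) (Fin p) ℝ) (hX : X ≠ 0)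
    (hcols : ∀ j : Fin p, ∑ i, (X i j) ^ 2 = 1)
    (y : Fin n → ℝ)
    -- FS_ε iterates
    (ε : ℝ) (hε0 : 0 < ε)
    (β : ℕ → Fin p → ℝ) (hβ0 : β 0 = 0)
    (r : ℕ → Fin n → ℝ) (hr : ∀ k, r k = y - X.mulVec (β k))
    (jj : ℕ → Fin p)
    (hjmax : ∀ k, ∀ j' : Fin p, |∑ i, r k i * X i j'| ≤ |∑ i, r k i * X i (jj k)|)
    (hupd : ∀ k, β (k + 1) = β k +
      (ε * Real.sign (∑ i, r k i * X i (jj k))) • (Pi.single (jj k) (1 : ℝ) : Fin p → ℝ))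
    -- βLS is any least squares solution
    (βLS : Fin p → ℝ) (hβLS : (Xᵀ * X).mulVec βLS = Xᵀ.mulVec y) :
    ∀ k : ℕ, ∃ i ≤ k, ∀ j' : Fin p,
      |∑ t, r i t * X t j'| ≤
        (∑ t, (X.mulVec βLS t) ^ 2) / (2 * ε * ((k : ℝ) + 1)) + ε / 2 := by
  -- normal equations
  have hnorm : ∀ j : Fin p, ∑ t, (y t - X.mulVec βLS t) * X t j = 0 := by
    intro j
    have h := congrFun hβLS j
    rw [← Matrix.mulVec_mulVec] at h
    simp only [Matrix.mulVec, dotProduct, Matrix.transpose_apply] at h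
    have : ∑ t, X t j * (y t - X.mulVec βLS t) = 0 := by
      simp only [mul_sub, Finset.sum_sub_distrib]
      rw [sub_eq_zero]
      simpa [Matrix.mulVec, dotProduct] using h.symm
    calc ∑ t, (y t - X.mulVec βLS t) * X t j
        = ∑ t, X t j * (y t - X.mulVec βLS t) := by
          exact Finset.sum_congr rfl fun t _ => mul_comm _ _
      _ = 0 := this
  set M : ℕ → ℝ := fun k => |∑ t, r k t * X t (jj k)| with hM
  set Q : ℕ → ℝ := fun k => ∑ t, (X.mulVec βLS t - X.mulVec (β k) t) ^ 2 with hQ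
  have hQnonneg : ∀ k, 0 ≤ Q k := fun k =>
    Finset.sum_nonneg fun t _ => sq_nonneg _
  -- key one-step inequality
  have hstep : ∀ k, Q (k + 1) + 2 * ε * M k ≤ Q k + ε ^ 2 := by
    intro k
    set j := jj k
    set c := ε * Real.sign (∑ t, r k t * X t j) with hc
    have hmv : ∀ t, X.mulVec (β (k + 1)) t = X.mulVec (β k) t + c * X t j := by
      intro t
      rw [hupd k]
      simp only [Matrix.mulVec, dotProduct, Pi.add_apply, Pi.smul_apply, smul_eq_mul]
      have : ∀ j' : Fin p, X t j' * (β k j' + c * (Pi.single j (1:ℝ) : Fin p → ℝ) j')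
          = X t j' * β k j' + c * (X t j' * (Pi.single j (1:ℝ) : Fin p → ℝ) j') := by
        intro j'; ring
      rw [Finset.sum_congr rfl fun j' _ => this j', Finset.sum_add_distrib]
      congr 1
      rw [← Finset.mul_sum]
      congr 1
      simp [Pi.single_apply, mul_ite]
    -- correlation identity: ∑ d t * X t j = corr
    have hcorr : ∑ t, (X.mulVec βLS t - X.mulVec (β k) t) * X t j
        = ∑ t, r k t * X t j := by
      have : ∀ t, (X.mulVec βLS t - X.mulVec (β k) t) * X t j
          = r k t * X t j - (y t - X.mulVec βLS t) * X t j := by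
        intro t; rw [hr k]; simp only [Pi.sub_apply]; ring
      rw [Finset.sum_congr rfl fun t _ => this t, Finset.sum_sub_distrib, hnorm j,
        sub_zero]
    have hexpand : Q (k + 1)
        = Q k - 2 * c * (∑ t, r k t * X t j) + c ^ 2 := by
      have : ∀ t, (X.mulVec βLS t - X.mulVec (β (k+1)) t) ^ 2
          = (X.mulVec βLS t - X.mulVec (β k) t) ^ 2
            - 2 * c * ((X.mulVec βLS t - X.mulVec (β k) t) * X t j)
            + c ^ 2 * (X t j) ^ 2 := by
        intro t; rw [hmv t]; ring
      simp only [hQ]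
      rw [Finset.sum_congr rfl fun t _ => this t, Finset.sum_add_distrib,
        Finset.sum_sub_distrib, ← Finset.mul_sum, hcorr, ← Finset.mul_sum, hcols j]
      ring
    have hsign : c * (∑ t, r k t * X t j) = ε * M k := by
      rw [hc, hM]
      simp only
      rw [mul_assoc, sign_mul_self_eq_abs]
    have hcsq : c ^ 2 ≤ ε ^ 2 := by
      rw [hc, mul_pow]
      nlinarith [sign_sq_le_one (∑ t, r k t * X t j), sq_nonneg ε]
    rw [hexpand]
    nlinarith [hsign, hcsq]
  -- telescoping
  have htel : ∀ k, Q (k + 1) + 2 * ε * ∑ i ∈ Finset.range (k + 1), M i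
      ≤ Q 0 + ((k : ℝ) + 1) * ε ^ 2 := by
    intro k
    induction k with
    | zero => simpa using hstep 0
    | succ k ih =>
      have h := hstep (k + 1)
      rw [Finset.sum_range_succ]
      push_cast
      push_cast at ih
      nlinarith
  have hQ0 : Q 0 = ∑ t, (X.mulVec βLS t) ^ 2 := by
    simp [hQ, hβ0, Matrix.mulVec_zero]
  intro k
  -- pick the minimizer of M over range (k+1)
  obtain ⟨i₀, hi₀mem, hi₀min⟩ := Finset.exists_min_image (Finset.range (k + 1)) M
    ⟨0, Finset.mem_range.mpr (Nat.succ_pos k)⟩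
  refine ⟨i₀, Nat.lt_succ_iff.mp (Finset.mem_range.mp hi₀mem), ?_⟩
  intro j'
  have hMsum : ((k : ℝ) + 1) * M i₀ ≤ ∑ i ∈ Finset.range (k + 1), M i := by
    have := Finset.card_nsmul_le_sum (Finset.range (k + 1)) M (M i₀)
      (fun i hi => hi₀min i hi)
    simpa [Finset.card_range, nsmul_eq_mul, add_comm] using this
  have hk1 : (0 : ℝ) < (k : ℝ) + 1 := by positivity
  have hbound : M i₀ ≤ (∑ t, (X.mulVec βLS t) ^ 2) / (2 * ε * ((k : ℝ) + 1)) + ε / 2 := by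
    have h1 := htel k
    have h2 := hQnonneg (k + 1)
    rw [hQ0] at h1
    rw [div_add' _ _ _ (by positivity), le_div_iff₀ (by positivity : (0:ℝ) < 2 * ε * ((k:ℝ)+1))]
    nlinarith [mul_le_mul_of_nonneg_left hMsum (le_of_lt (by positivity : (0:ℝ) < 2 * ε))]
  exact le_trans (le_trans (hjmax i₀ j') (le_of_eq rfl)) hbound

end
end

section
/- Let δ > 0 and let β ∈ ℝᵖ be feasible for the Lasso problem, i.e., ‖β‖₁ ≤ δ, and set r := y − Xβ. Then the quantity ω_δ(β) := ‖Xᵀr‖_∞ − (rᵀXβ)/δ satisfies ω_δ(β) ≥ 0, and the Lasso optimality gap is bounded as L_n(β) − L*_{n,δ} ≤ (δ/n)·ω_δ(β). In particular, if ω_δ(β) = 0 then β is an optimal solution of the Lasso problem. -/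
open Matrix Finset

noncomputable section

/-- **Proposition 4.1(iii) (optimality condition / gap bound for the Lasso).** For δ > 0
and β feasible for the Lasso (‖β‖₁ ≤ δ) with residuals r = y − Xβ, the quantity
`ω_δ(β) := ‖Xᵀr‖_∞ − (rᵀXβ)/δ` satisfies `ω_δ(β) ≥ 0` and
`L_n(β) − L*_{n,δ} ≤ (δ/n)·ω_δ(β)`; in particular if `ω_δ(β) = 0` then β is optimal for
the Lasso. -/
theorem lasso_optimality_gap_bound
    (n p : ℕ) (hn : 0 < n) (hp : 0 < p)
    (hne : (Finset.univ : Finset (Fin p)).Nonempty)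
    (X : Matrix (Fin n) (Fin p) ℝ) (y : Fin n → ℝ)
    (Ln : (Fin p → ℝ) → ℝ)
    (hLn : Ln = fun β => (1 / (2 * (n : ℝ))) * ∑ i, (y i - X.mulVec β i) ^ 2)
    (δ : ℝ) (hδ : 0 < δ)
    -- L*_{n,δ} is the optimal value of the Lasso problem
    (LnδStar : ℝ)
    (hLnδStar : LnδStar = sInf (Ln '' {β' : Fin p → ℝ | (∑ j, |β' j|) ≤ δ}))
    (β : Fin p → ℝ) (hβfeas : (∑ j, |β j|) ≤ δ)
    (r : Fin n → ℝ) (hrdef : r = y - X.mulVec β)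
    (ω : ℝ)
    (hω : ω = (Finset.univ.sup' hne fun j => |∑ i, r i * X i j|)
        - (∑ i, r i * X.mulVec β i) / δ) :
    0 ≤ ω ∧
    Ln β - LnδStar ≤ (δ / (n : ℝ)) * ω ∧
    (ω = 0 → ∀ β' : Fin p → ℝ, (∑ j, |β' j|) ≤ δ → Ln β ≤ Ln β') := by
  have hn0 : (0:ℝ) < (n:ℝ) := by exact_mod_cast hn
  set M : ℝ := Finset.univ.sup' hne fun j => |∑ i, r i * X i j| with hM
  have hM0 : 0 ≤ M := by
    obtain ⟨j, hj⟩ := hne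
    rw [hM]
    exact le_trans (abs_nonneg _) (Finset.le_sup' (fun j => |∑ i, r i * X i j|) (Finset.mem_univ j))
  -- swap sums
  have hswap : ∀ v : Fin p → ℝ,
      ∑ i, r i * X.mulVec v i = ∑ j, v j * ∑ i, r i * X i j := by
    intro v
    simp only [Matrix.mulVec, dotProduct, Finset.mul_sum]
    rw [Finset.sum_comm]
    apply Finset.sum_congr rfl
    intro j _
    apply Finset.sum_congr rfl
    intro i _
    ring
  -- key bound
  have key : ∀ v : Fin p → ℝ, (∑ j, |v j|) ≤ δ →
      ∑ i, r i * X.mulVec v i ≤ M * δ := by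
    intro v hv
    rw [hswap]
    calc ∑ j, v j * ∑ i, r i * X i j
        ≤ ∑ j, |v j| * M := by
          apply Finset.sum_le_sum
          intro j _
          calc v j * ∑ i, r i * X i j ≤ |v j * ∑ i, r i * X i j| := le_abs_self _
            _ = |v j| * |∑ i, r i * X i j| := abs_mul _ _
            _ ≤ |v j| * M := by
                rw [hM]
                exact mul_le_mul_of_nonneg_left (Finset.le_sup' (fun j => |∑ i, r i * X i j|) (Finset.mem_univ j))
                  (abs_nonneg _)
      _ = (∑ j, |v j|) * M := by rw [Finset.sum_mul]
      _ ≤ δ * M := mul_le_mul_of_nonneg_right hv hM0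
      _ = M * δ := mul_comm _ _
  have hβle := key β hβfeas
  have hω0 : 0 ≤ ω := by
    rw [hω, sub_nonneg, div_le_iff₀ hδ]
    exact hβle
  -- gap bound for each feasible β'
  have gap : ∀ β' : Fin p → ℝ, (∑ j, |β' j|) ≤ δ →
      Ln β - Ln β' ≤ (δ / (n : ℝ)) * ω := by
    intro β' hβ'
    have e2 : ∑ i, (y i - X.mulVec β' i) ^ 2
        = ∑ i, ((r i) ^ 2 - 2 * (r i * (X.mulVec β' i - X.mulVec β i))
            + (X.mulVec β' i - X.mulVec β i) ^ 2) := by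
      apply Finset.sum_congr rfl
      intro i _
      have : r i = y i - X.mulVec β i := by rw [hrdef]; simp
      rw [this]; ring
    have hd2 : (0:ℝ) ≤ ∑ i, (X.mulVec β' i - X.mulVec β i) ^ 2 :=
      Finset.sum_nonneg fun i _ => sq_nonneg _
    have hrr : ∑ i, (r i) ^ 2 = ∑ i, (y i - X.mulVec β i) ^ 2 := by
      apply Finset.sum_congr rfl
      intro i _
      rw [hrdef]; simp
    have hsplit : ∑ i, r i * (X.mulVec β' i - X.mulVec β i)
        = (∑ i, r i * X.mulVec β' i) - ∑ i, r i * X.mulVec β i := by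
      rw [← Finset.sum_sub_distrib]
      apply Finset.sum_congr rfl
      intro i _
      ring
    have hb' := key β' hβ'
    have h1 : Ln β - Ln β' ≤ (1 / (n:ℝ)) *
        ((∑ i, r i * X.mulVec β' i) - ∑ i, r i * X.mulVec β i) := by
      rw [hLn]
      simp only
      rw [e2, Finset.sum_add_distrib, Finset.sum_sub_distrib, hrr, ← Finset.mul_sum,
        ← hsplit]
      have h2n : (0:ℝ) < 1 / (2 * (n:ℝ)) := by positivity
      rw [hsplit]
      set s := (∑ i, r i * X.mulVec β' i) - ∑ i, r i * X.mulVec β i with hs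
      set q := ∑ i, (X.mulVec β' i - X.mulVec β i) ^ 2
      have : 1 / (2 * (n:ℝ)) * (∑ i, (y i - X.mulVec β i) ^ 2)
          - 1 / (2 * (n:ℝ)) * ((∑ i, (y i - X.mulVec β i) ^ 2) - 2 * s + q)
          = 1 / (n:ℝ) * s - 1 / (2 * (n:ℝ)) * q := by
        field_simp
        ring
      rw [this]
      nlinarith [mul_nonneg (le_of_lt h2n) hd2]
    have h3 : (∑ i, r i * X.mulVec β' i) - ∑ i, r i * X.mulVec β i
        ≤ M * δ - ∑ i, r i * X.mulVec β i := by linarith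
    have h4 : (1 / (n:ℝ)) * (M * δ - ∑ i, r i * X.mulVec β i)
        = (δ / (n : ℝ)) * ω := by
      rw [hω]
      field_simp
    calc Ln β - Ln β' ≤ (1 / (n:ℝ)) *
          ((∑ i, r i * X.mulVec β' i) - ∑ i, r i * X.mulVec β i) := h1
      _ ≤ (1 / (n:ℝ)) * (M * δ - ∑ i, r i * X.mulVec β i) := by
          apply mul_le_mul_of_nonneg_left h3 (by positivity)
      _ = (δ / (n : ℝ)) * ω := h4
  refine ⟨hω0, ?_, ?_⟩
  · rw [hLnδStar]
    have hle : Ln β - (δ / (n:ℝ)) * ω ≤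
        sInf (Ln '' {β' : Fin p → ℝ | (∑ j, |β' j|) ≤ δ}) := by
      apply le_csInf
      · exact ⟨Ln β, ⟨β, hβfeas, rfl⟩⟩
      · rintro x ⟨β', hβ', rfl⟩
        have := gap β' hβ'
        linarith
    linarith
  · intro hω0' β' hβ'
    have := gap β' hβ'
    rw [hω0'] at this
    simp at this
    linarith
end
end

section
/- For the R-FS_{ε,δ} iterates with learning rate ε and regularization parameter δ satisfying 0 < ε ≤ δ: (a) every iterate is feasible for the Lasso problem, with the geometric shrinkage bound ‖β^k‖₁ ≤ δ·[1 − (1 − ε/δ)^k] ≤ δ for all k ≥ 0; and (b) for every k ≥ 0 there exists an index i ∈ {0, …, k} such that L_n(β^i) − L*_{n,δ} ≤ (δ/n)·[ ‖Xβ_LS‖₂²/(2ε(k+1)) + 2ε ], where β_LS is any least squares solution. -/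
open Matrix Finset

noncomputable section

lemma rfs_expand {n p : ℕ} (X : Matrix (Fin n) (Fin p) ℝ) (y : Fin n → ℝ) (b d : Fin p → ℝ) :
    ∑ i, (y i - X.mulVec (b + d) i) ^ 2
      = ∑ i, (y i - X.mulVec b i) ^ 2
        - 2 * ∑ j, (∑ i, (y i - X.mulVec b i) * X i j) * d j
        + ∑ i, (X.mulVec d i) ^ 2 := by
  have h1 : ∀ i, X.mulVec (b + d) i = X.mulVec b i + X.mulVec d i := by
    intro i; rw [Matrix.mulVec_add]; rfl
  have h2 : ∑ i, (y i - X.mulVec b i) * X.mulVec d i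
      = ∑ j, (∑ i, (y i - X.mulVec b i) * X i j) * d j := by
    simp only [Matrix.mulVec, dotProduct, Finset.mul_sum, Finset.sum_mul]
    rw [Finset.sum_comm]
    apply Finset.sum_congr rfl; intro j _; apply Finset.sum_congr rfl; intro i _; ring
  calc ∑ i, (y i - X.mulVec (b + d) i) ^ 2
      = ∑ i, ((y i - X.mulVec b i) ^ 2 - 2 * ((y i - X.mulVec b i) * X.mulVec d i)
          + (X.mulVec d i) ^ 2) := by
        apply Finset.sum_congr rfl; intro i _; rw [h1]; ring
    _ = _ := by
        rw [Finset.sum_add_distrib, Finset.sum_sub_distrib, ← Finset.mul_sum, h2]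

lemma rfs_l1 {n p : ℕ} (X : Matrix (Fin n) (Fin p) ℝ)
    (hcols : ∀ j : Fin p, ∑ i, (X i j) ^ 2 = 1) (d : Fin p → ℝ) :
    ∑ i, (X.mulVec d i) ^ 2 ≤ (∑ j, |d j|) ^ 2 := by
  have key : ∀ j j' : Fin p, (∑ i, X i j * X i j') * (d j * d j') ≤ |d j| * |d j'| := by
    intro j j'
    have hcs : (∑ i, X i j * X i j') ^ 2 ≤ 1 := by
      have := Finset.sum_mul_sq_le_sq_mul_sq Finset.univ (fun i => X i j) (fun i => X i j')
      simpa [hcols j, hcols j'] using this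
    have habs : |∑ i, X i j * X i j'| ≤ 1 := (sq_le_one_iff_abs_le_one _).mp hcs
    calc (∑ i, X i j * X i j') * (d j * d j') ≤ |(∑ i, X i j * X i j') * (d j * d j')| :=
          le_abs_self _
      _ = |∑ i, X i j * X i j'| * (|d j| * |d j'|) := by rw [abs_mul, abs_mul]
      _ ≤ 1 * (|d j| * |d j'|) := by
          apply mul_le_mul_of_nonneg_right habs (by positivity)
      _ = |d j| * |d j'| := one_mul _
  calc ∑ i, (X.mulVec d i) ^ 2
      = ∑ j, ∑ j', (∑ i, X i j * X i j') * (d j * d j') := by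
        simp only [Matrix.mulVec, dotProduct, sq, Finset.sum_mul_sum, Finset.sum_mul,
          Finset.mul_sum]
        rw [Finset.sum_comm]
        apply Finset.sum_congr rfl; intro j _
        rw [Finset.sum_comm]
        apply Finset.sum_congr rfl; intro j' _
        apply Finset.sum_congr rfl; intro i _; ring
    _ ≤ ∑ j, ∑ j', |d j| * |d j'| := by
        apply Finset.sum_le_sum; intro j _; apply Finset.sum_le_sum; intro j' _; exact key j j'
    _ = (∑ j, |d j|) ^ 2 := by rw [sq, Finset.sum_mul_sum]


set_option maxHeartbeats 2000000 in
/-- **Theorem 4.1(i),(iii) (computational guarantees for R-FS_{ε,δ}).** For the R-FS_{ε,δ}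
iterates with 0 < ε ≤ δ: (a) every iterate is Lasso-feasible, with
`‖β^k‖₁ ≤ δ·[1 − (1 − ε/δ)^k] ≤ δ`; and (b) for every k there exists i ∈ {0,…,k} with
`L_n(β^i) − L*_{n,δ} ≤ (δ/n)·[‖Xβ_LS‖₂²/(2ε(k+1)) + 2ε]`. -/
theorem rfs_shrinkage_and_training_error
    (n p : ℕ) (hn : 0 < n) (hp : 0 < p)
    (X : Matrix (Fin n) (Fin p) ℝ)
    (hcols : ∀ j : Fin p, ∑ i, (X i j) ^ 2 = 1)
    (y : Fin n → ℝ)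
    (Ln : (Fin p → ℝ) → ℝ)
    (hLn : Ln = fun β => (1 / (2 * (n : ℝ))) * ∑ i, (y i - X.mulVec β i) ^ 2)
    (δ : ℝ) (ε : ℝ) (hε0 : 0 < ε) (hεδ : ε ≤ δ)
    -- L*_{n,δ} is the optimal value of the Lasso problem with parameter δ
    (LnδStar : ℝ)
    (hLnδStar : LnδStar = sInf (Ln '' {β' : Fin p → ℝ | (∑ j, |β' j|) ≤ δ}))
    -- R-FS_{ε,δ} iterates
    (β : ℕ → Fin p → ℝ) (hβ0 : β 0 = 0)
    (r : ℕ → Fin n → ℝ) (hr : ∀ k, r k = y - X.mulVec (β k))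
    (jj : ℕ → Fin p)
    (hjmax : ∀ k, ∀ j' : Fin p, |∑ i, r k i * X i j'| ≤ |∑ i, r k i * X i (jj k)|)
    (hupd : ∀ k, β (k + 1) = (1 - ε / δ) • β k +
      (ε * Real.sign (∑ i, r k i * X i (jj k))) • (Pi.single (jj k) (1 : ℝ) : Fin p → ℝ))
    -- βLS is any least squares solution
    (βLS : Fin p → ℝ) (hβLS : (Xᵀ * X).mulVec βLS = Xᵀ.mulVec y) :
    (∀ k : ℕ, (∑ j, |β k j|) ≤ δ * (1 - (1 - ε / δ) ^ k) ∧
      δ * (1 - (1 - ε / δ) ^ k) ≤ δ) ∧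
    (∀ k : ℕ, ∃ i ≤ k, Ln (β i) - LnδStar ≤
      (δ / (n : ℝ)) * ((∑ t, (X.mulVec βLS t) ^ 2) / (2 * ε * ((k : ℝ) + 1)) + 2 * ε)) := by
  have hδ0 : 0 < δ := lt_of_lt_of_le hε0 hεδ
  set ν : ℝ := (n : ℝ) with hνdef
  have hν : 0 < ν := Nat.cast_pos.mpr hn
  set α : ℝ := ε / δ with hαdef
  have hα0 : 0 < α := div_pos hε0 hδ0
  have hα1 : α ≤ 1 := (div_le_one hδ0).mpr hεδ
  have h1α : 0 ≤ 1 - α := by linarith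
  have hαδ : α * δ = ε := div_mul_cancel₀ ε hδ0.ne'
  clear_value ν α
  have hsabs : ∀ t : ℝ, |Real.sign t| ≤ 1 := by
    intro t; rcases Real.sign_apply_eq t with h | h | h <;> rw [h] <;> norm_num
  -- part (a)
  have hfeas : ∀ k : ℕ, (∑ j, |β k j|) ≤ δ * (1 - (1 - α) ^ k) := by
    intro k
    induction k with
    | zero => simp [hβ0]
    | succ k ih =>
      have hpt : ∀ j : Fin p, |β (k + 1) j| ≤
          (1 - α) * |β k j| + ε * (if j = jj k then 1 else 0) := by
        intro j
        rw [hupd k]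
        simp only [Pi.add_apply, Pi.smul_apply, smul_eq_mul, Pi.single_apply]
        by_cases hj : j = jj k
        · simp only [hj, if_pos rfl]
          calc |(1 - α) * β k (jj k) + ε * Real.sign (∑ i, r k i * X i (jj k)) * 1|
              ≤ |(1 - α) * β k (jj k)| + |ε * Real.sign (∑ i, r k i * X i (jj k)) * 1| :=
                abs_add_le _ _
            _ ≤ (1 - α) * |β k (jj k)| + ε * 1 := by
                rw [abs_mul, abs_of_nonneg h1α, mul_one, abs_mul, abs_of_nonneg hε0.le]
                have := hsabs (∑ i, r k i * X i (jj k))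
                nlinarith
            _ = (1 - α) * |β k (jj k)| + ε * 1 := rfl
        · simp [hj, abs_mul, abs_of_nonneg h1α]
      calc ∑ j, |β (k + 1) j|
          ≤ ∑ j, ((1 - α) * |β k j| + ε * (if j = jj k then 1 else 0)) :=
            Finset.sum_le_sum fun j _ => hpt j
        _ = (1 - α) * (∑ j, |β k j|) + ε := by
            rw [Finset.sum_add_distrib, ← Finset.mul_sum, ← Finset.mul_sum]
            simp
        _ ≤ (1 - α) * (δ * (1 - (1 - α) ^ k)) + ε :=
            by nlinarith [mul_le_mul_of_nonneg_left ih h1α]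
        _ = δ * (1 - (1 - α) ^ (k + 1)) := by linear_combination -hαδ
  have hfeasδ : ∀ k : ℕ, (∑ j, |β k j|) ≤ δ := by
    intro k
    refine (hfeas k).trans ?_
    nlinarith [pow_nonneg h1α k]
  -- abbreviations
  set Q : (Fin p → ℝ) → ℝ := fun b => ∑ i, (y i - X.mulVec b i) ^ 2 with hQdef
  clear_value Q
  have hQnn : ∀ b, 0 ≤ Q b := by
    intro b; rw [hQdef]; exact Finset.sum_nonneg fun i _ => sq_nonneg _
  have hc : ∀ (k : ℕ) (j : Fin p),
      (∑ i, (y i - X.mulVec (β k) i) * X i j) = ∑ i, r k i * X i j := by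
    intro k j
    apply Finset.sum_congr rfl; intro i _
    rw [hr k]; simp [Pi.sub_apply]
  -- normal equations: residual of βLS is orthogonal to columns
  have hz : ∀ j : Fin p, (∑ i, (y i - X.mulVec βLS i) * X i j) = 0 := by
    intro j
    have h := congrFun hβLS j
    rw [← Matrix.mulVec_mulVec] at h
    simp only [Matrix.mulVec, dotProduct, Matrix.transpose_apply] at h
    have : ∑ i, (y i - X.mulVec βLS i) * X i j
        = (∑ i, X i j * y i) - ∑ i, X i j * X.mulVec βLS i := by
      rw [← Finset.sum_sub_distrib]
      apply Finset.sum_congr rfl; intro i _; ring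
    rw [this, ← h]
    simp only [Matrix.mulVec, dotProduct, sub_self]
  -- βLS minimizes Q over everything
  have hQLS : ∀ b, Q βLS ≤ Q b := by
    intro b
    have h := rfs_expand X y βLS (b - βLS)
    rw [add_sub_cancel] at h
    simp only [hz, zero_mul, Finset.sum_const_zero, mul_zero, sub_zero] at h
    have hnn : 0 ≤ ∑ i, (X.mulVec (b - βLS) i) ^ 2 :=
      Finset.sum_nonneg fun i _ => sq_nonneg _
    simp only [hQdef]
    linarith [h.ge, h.le, hnn]
  have hQLSle : Q βLS ≤ Q βLS + 0 := by linarith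
  -- nonemptiness of the feasible image
  have hne : (Ln '' {β' : Fin p → ℝ | (∑ j, |β' j|) ≤ δ}).Nonempty := by
    refine ⟨Ln 0, ⟨0, ?_, rfl⟩⟩
    simp [hδ0.le]
  -- lower bound on LnδStar
  have hLstar_lb : (1 / (2 * ν)) * Q βLS ≤ LnδStar := by
    rw [hLnδStar]
    apply le_csInf hne
    rintro v ⟨b, _, rfl⟩
    rw [hLn]
    have h := hQLS b
    simp only [hQdef] at h ⊢
    exact mul_le_mul_of_nonneg_left h (by positivity)
  -- the Frank–Wolfe gap bound via feasibility
  have hgap : ∀ k : ℕ,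
      (1 / (2 * ν)) * (Q (β k) - 2 * (δ * |∑ i, r k i * X i (jj k)|
        - ∑ j, (∑ i, r k i * X i j) * β k j)) ≤ LnδStar := by
    intro k
    rw [hLnδStar]
    apply le_csInf hne
    rintro v ⟨b, hb, rfl⟩
    rw [hLn]
    simp only [Set.mem_setOf_eq] at hb
    have h := rfs_expand X y (β k) (b - β k)
    rw [add_sub_cancel] at h
    simp only [hc] at h
    have hM0 : 0 ≤ |∑ i, r k i * X i (jj k)| := abs_nonneg _
    have hdot : ∑ j, (∑ i, r k i * X i j) * b j ≤ δ * |∑ i, r k i * X i (jj k)| := by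
      calc ∑ j, (∑ i, r k i * X i j) * b j
          ≤ ∑ j, |∑ i, r k i * X i (jj k)| * |b j| := by
            apply Finset.sum_le_sum; intro j _
            calc (∑ i, r k i * X i j) * b j ≤ |(∑ i, r k i * X i j) * b j| := le_abs_self _
              _ = |∑ i, r k i * X i j| * |b j| := abs_mul _ _
              _ ≤ |∑ i, r k i * X i (jj k)| * |b j| :=
                  mul_le_mul_of_nonneg_right (hjmax k j) (abs_nonneg _)
        _ = |∑ i, r k i * X i (jj k)| * ∑ j, |b j| := by rw [Finset.mul_sum]
        _ ≤ |∑ i, r k i * X i (jj k)| * δ := mul_le_mul_of_nonneg_left hb hM0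
        _ = δ * |∑ i, r k i * X i (jj k)| := mul_comm _ _
    have hsq : 0 ≤ ∑ i, (X.mulVec (b - β k) i) ^ 2 :=
      Finset.sum_nonneg fun i _ => sq_nonneg _
    have hsub : ∑ j, (∑ i, r k i * X i j) * (b - β k) j
        = (∑ j, (∑ i, r k i * X i j) * b j) - ∑ j, (∑ i, r k i * X i j) * β k j := by
      rw [← Finset.sum_sub_distrib]
      apply Finset.sum_congr rfl; intro j _; simp [Pi.sub_apply]; ring
    rw [hsub] at h
    apply mul_le_mul_of_nonneg_left _ (show (0:ℝ) ≤ 1 / (2 * ν) by positivity)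
    simp only [hQdef]
    nlinarith [h.le, h.ge]
  -- sign fact
  have hsgn : ∀ t : ℝ, Real.sign t * t = |t| := by
    intro t
    rcases lt_trichotomy t 0 with h | h | h
    · rw [Real.sign_of_neg h, abs_of_neg h]; ring
    · simp [h]
    · rw [Real.sign_of_pos h, abs_of_pos h]; ring
  -- descent step
  have hdesc : ∀ k : ℕ, Q (β (k + 1)) ≤ Q (β k)
      - 2 * α * (δ * |∑ i, r k i * X i (jj k)| - ∑ j, (∑ i, r k i * X i j) * β k j)
      + 4 * ε ^ 2 := by
    intro k
    set s : ℝ := Real.sign (∑ i, r k i * X i (jj k)) with hsdef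
    have hdiff : ∀ j : Fin p, β (k + 1) j - β k j
        = -α * β k j + (if j = jj k then ε * s else 0) := by
      intro j
      rw [hupd k]
      simp only [Pi.add_apply, Pi.smul_apply, smul_eq_mul, Pi.single_apply]
      by_cases hj : j = jj k <;> simp [hj] <;> ring
    have hT1 : ∑ j, (∑ i, r k i * X i j) * (β (k + 1) j - β k j)
        = ε * |∑ i, r k i * X i (jj k)| - α * ∑ j, (∑ i, r k i * X i j) * β k j := by
      calc ∑ j, (∑ i, r k i * X i j) * (β (k + 1) j - β k j)
          = ∑ j, (-α * ((∑ i, r k i * X i j) * β k j)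
              + (if j = jj k then ε * (s * (∑ i, r k i * X i j)) else 0)) := by
            apply Finset.sum_congr rfl; intro j _
            rw [hdiff j]
            by_cases hj : j = jj k <;> simp [hj] <;> ring
        _ = -α * ∑ j, (∑ i, r k i * X i j) * β k j
            + ε * (s * (∑ i, r k i * X i (jj k))) := by
            rw [Finset.sum_add_distrib, ← Finset.mul_sum, Finset.sum_ite_eq' Finset.univ (jj k)]
            simp
        _ = ε * |∑ i, r k i * X i (jj k)| - α * ∑ j, (∑ i, r k i * X i j) * β k j := by
            rw [hsdef, hsgn]; ring
    have hl1d : ∑ j, |β (k + 1) j - β k j| ≤ 2 * ε := by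
      have hpt : ∀ j : Fin p, |β (k + 1) j - β k j|
          ≤ α * |β k j| + (if j = jj k then ε else 0) := by
        intro j
        rw [hdiff j]
        refine (abs_add_le _ _).trans ?_
        apply add_le_add
        · rw [abs_mul, abs_neg, abs_of_pos hα0]
        · by_cases hj : j = jj k <;> simp [hj]
          rw [abs_of_pos hε0]
          have := hsabs (∑ i, r k i * X i (jj k))
          rw [← hsdef] at this
          nlinarith
      calc ∑ j, |β (k + 1) j - β k j|
          ≤ ∑ j, (α * |β k j| + (if j = jj k then ε else 0)) :=
            Finset.sum_le_sum fun j _ => hpt j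
        _ = α * (∑ j, |β k j|) + ε := by
            rw [Finset.sum_add_distrib, ← Finset.mul_sum, Finset.sum_ite_eq' Finset.univ (jj k)]
            simp
        _ ≤ α * δ + ε := by nlinarith [mul_le_mul_of_nonneg_left (hfeasδ k) hα0.le]
        _ = 2 * ε := by rw [hαδ]; ring
    have hT2 : ∑ i, (X.mulVec (β (k + 1) - β k) i) ^ 2 ≤ 4 * ε ^ 2 := by
      refine (rfs_l1 X hcols _).trans ?_
      have h1 : (∑ j, |(β (k + 1) - β k) j|) = ∑ j, |β (k + 1) j - β k j| := by
        apply Finset.sum_congr rfl; intro j _; simp [Pi.sub_apply]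
      have h2 : (0:ℝ) ≤ ∑ j, |(β (k + 1) - β k) j| :=
        Finset.sum_nonneg fun j _ => abs_nonneg _
      have h3 : (∑ j, |(β (k + 1) - β k) j|) ≤ 2 * ε := by rw [h1]; exact hl1d
      nlinarith
    have h := rfs_expand X y (β k) (β (k + 1) - β k)
    rw [add_sub_cancel] at h
    simp only [hc] at h
    have hsub : ∑ j, (∑ i, r k i * X i j) * (β (k + 1) - β k) j
        = ∑ j, (∑ i, r k i * X i j) * (β (k + 1) j - β k j) := by
      apply Finset.sum_congr rfl; intro j _; simp [Pi.sub_apply]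
    rw [hsub, hT1] at h
    have hεα : ε * |∑ i, r k i * X i (jj k)| = α * (δ * |∑ i, r k i * X i (jj k)|) := by
      rw [← hαδ]; ring
    have hQ1 : Q (β (k + 1)) = ∑ i, (y i - X.mulVec (β (k + 1)) i) ^ 2 := by rw [hQdef]
    have hQ2 : Q (β k) = ∑ i, (y i - X.mulVec (β k) i) ^ 2 := by rw [hQdef]
    rw [← hQ1, ← hQ2] at h
    have hT2' : ∑ i, (X.mulVec (β (k + 1) - β k) i) ^ 2 ≤ 4 * ε ^ 2 := hT2
    linarith [h.le, hεα]
  -- recursion for the optimality gap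
  have hrec : ∀ k : ℕ, (1 / (2 * ν)) * Q (β (k + 1)) - LnδStar
      ≤ (1 - α) * ((1 / (2 * ν)) * Q (β k) - LnδStar) + 2 * ε ^ 2 / ν := by
    intro k
    set G : ℝ := δ * |∑ i, r k i * X i (jj k)| - ∑ j, (∑ i, r k i * X i j) * β k j with hGdef
    clear_value G
    have hgap' : Q (β k) - 2 * G ≤ 2 * ν * LnδStar := by
      have h := hgap k
      rw [← hGdef, one_div, inv_mul_le_iff₀ (by positivity : (0:ℝ) < 2 * ν)] at h
      linarith
    have hd := hdesc k
    rw [← hGdef] at hd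
    have hclear : Q (β (k + 1)) ≤ (1 - α) * Q (β k) + α * (2 * ν * LnδStar) + 4 * ε ^ 2 := by
      linarith [hd, mul_le_mul_of_nonneg_left hgap' hα0.le]
    have h2 := mul_le_mul_of_nonneg_left hclear (show (0:ℝ) ≤ 1 / (2 * ν) by positivity)
    have heq : (1 / (2 * ν)) * ((1 - α) * Q (β k) + α * (2 * ν * LnδStar) + 4 * ε ^ 2)
        = (1 - α) * ((1 / (2 * ν)) * Q (β k) - LnδStar) + 2 * ε ^ 2 / ν + LnδStar := by
      field_simp
      ring
    linarith [h2]
  -- iterate the recursion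
  have hiter : ∀ k : ℕ, (1 / (2 * ν)) * Q (β k) - LnδStar
      ≤ (1 - α) ^ k * ((1 / (2 * ν)) * Q (β 0) - LnδStar) + 2 * ε * δ / ν := by
    intro k
    induction k with
    | zero =>
      have : 0 ≤ 2 * ε * δ / ν := by positivity
      simp only [pow_zero, one_mul]
      linarith
    | succ k ih =>
      have h1 := mul_le_mul_of_nonneg_left ih h1α
      have heq : (1 - α) * ((1 - α) ^ k * ((1 / (2 * ν)) * Q (β 0) - LnδStar) + 2 * ε * δ / ν)
          + 2 * ε ^ 2 / ν
          = (1 - α) ^ (k + 1) * ((1 / (2 * ν)) * Q (β 0) - LnδStar) + 2 * ε * δ / ν := by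
        rw [← hαδ]
        field_simp
        ring
      linarith [hrec k]
  -- bound on the initial gap
  have hW0 : (1 / (2 * ν)) * Q (β 0) - LnδStar ≤ (∑ t, (X.mulVec βLS t) ^ 2) / (2 * ν) := by
    have h := rfs_expand X y βLS (-βLS)
    rw [add_neg_cancel] at h
    simp only [hz, zero_mul, Finset.sum_const_zero, mul_zero, sub_zero] at h
    have hneg : ∑ i, (X.mulVec (-βLS) i) ^ 2 = ∑ t, (X.mulVec βLS t) ^ 2 := by
      apply Finset.sum_congr rfl; intro i _
      rw [Matrix.mulVec_neg]
      simp [neg_sq]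
    rw [hneg] at h
    have hQ0 : Q (β 0) = Q βLS + ∑ t, (X.mulVec βLS t) ^ 2 := by
      rw [hβ0]; simp only [hQdef]
      exact h
    have heq : (1 / (2 * ν)) * (Q βLS + ∑ t, (X.mulVec βLS t) ^ 2)
        = (1 / (2 * ν)) * Q βLS + (∑ t, (X.mulVec βLS t) ^ 2) / (2 * ν) := by ring
    rw [hQ0, heq]
    linarith [hLstar_lb]
  -- Bernoulli-type bound
  have hBern : ∀ k : ℕ, (1 + α * k) * (1 - α) ^ k ≤ 1 := by
    intro k
    induction k with
    | zero => simp
    | succ k ih =>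
      have h1 : (1 + α * ((k : ℝ) + 1)) * (1 - α) ≤ 1 + α * k := by
        nlinarith [mul_nonneg (sq_nonneg α) (Nat.cast_nonneg k : (0:ℝ) ≤ (k : ℝ))]
      calc (1 + α * ((k : ℕ) + 1 : ℕ)) * (1 - α) ^ (k + 1)
          = ((1 + α * ((k : ℝ) + 1)) * (1 - α)) * (1 - α) ^ k := by push_cast; ring
        _ ≤ (1 + α * k) * (1 - α) ^ k :=
            mul_le_mul_of_nonneg_right h1 (pow_nonneg h1α k)
        _ ≤ 1 := ih
  have hpw : ∀ k : ℕ, α * ((k : ℝ) + 1) * (1 - α) ^ k ≤ 1 := by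
    intro k
    have h1 : α * ((k : ℝ) + 1) ≤ 1 + α * k := by nlinarith [(Nat.cast_nonneg k : (0:ℝ) ≤ (k : ℝ))]
    calc α * ((k : ℝ) + 1) * (1 - α) ^ k ≤ (1 + α * k) * (1 - α) ^ k :=
          mul_le_mul_of_nonneg_right h1 (pow_nonneg h1α k)
      _ ≤ 1 := hBern k
  -- conclude
  refine ⟨fun k => ⟨hfeas k, ?_⟩, fun k => ⟨k, le_refl k, ?_⟩⟩
  · nlinarith [pow_nonneg h1α k, hδ0]
  · have hWnn : (0:ℝ) ≤ ∑ t, (X.mulVec βLS t) ^ 2 :=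
      Finset.sum_nonneg fun t _ => sq_nonneg _
    have hk1 : (0:ℝ) < (k : ℝ) + 1 := by positivity
    have hfin : (1 / (2 * ν)) * Q (β k) - LnδStar
        ≤ (δ / ν) * ((∑ t, (X.mulVec βLS t) ^ 2) / (2 * ε * ((k : ℝ) + 1)) + 2 * ε) := by
      calc (1 / (2 * ν)) * Q (β k) - LnδStar
          ≤ (1 - α) ^ k * ((1 / (2 * ν)) * Q (β 0) - LnδStar) + 2 * ε * δ / ν := hiter k
        _ ≤ (1 - α) ^ k * ((∑ t, (X.mulVec βLS t) ^ 2) / (2 * ν)) + 2 * ε * δ / ν := by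
            have := mul_le_mul_of_nonneg_left hW0 (pow_nonneg h1α k)
            linarith
        _ ≤ (δ / (ε * ((k : ℝ) + 1))) * ((∑ t, (X.mulVec βLS t) ^ 2) / (2 * ν))
              + 2 * ε * δ / ν := by
            apply add_le_add_left
            apply mul_le_mul_of_nonneg_right _ (by positivity)
            rw [le_div_iff₀ (by positivity : (0:ℝ) < ε * ((k : ℝ) + 1))]
            calc (1 - α) ^ k * (ε * ((k : ℝ) + 1))
                = δ * (α * ((k : ℝ) + 1) * (1 - α) ^ k) := by rw [← hαδ]; ring
              _ ≤ δ * 1 := mul_le_mul_of_nonneg_left (hpw k) hδ0.le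
              _ = δ := mul_one δ
        _ = (δ / ν) * ((∑ t, (X.mulVec βLS t) ^ 2) / (2 * ε * ((k : ℝ) + 1)) + 2 * ε) := by
            field_simp
    rw [hLn]
    simp only [hQdef] at hfin
    exact hfin

end
end
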